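/- arXiv:2301.12951 — 2 statements merged into one kernel-verified Lean document; each statement's English description precedes it below -/
import Mathlib

section
/- Let (Ω, 𝒫) be a probability space and let X_i, X_j and families of integrable real-valued random variables Z^i_1,…,Z^i_{d_i^{y0}}, W^i_1,…,W^i_{d_i^{y1}}, Z^j_1,…,Z^j_{d_j^{y0}}, W^j_1,…,W^j_{d_j^{y1}} be given, with E[X_i] = E[X_j] = μ₀, E[Z^i_k] = E[Z^j_k] = μ₀, and E[W^i_k] = E[W^j_k] = μ₁. Set d_i = d_i^{y0} + d_i^{y1}, d_j = d_j^{y0} + d_j^{y1}, A_i = (X_i + ΣZ^i + ΣW^i)/(d_i+1), and A_j = (X_j + ΣZ^j + ΣW^j)/(d_j+1). Then E[(A_i − X_j)/(d_i+2) − (A_j − X_i)/(d_j+2)] = (μ₁ − μ₀)·δ, where δ = d_i^{y1}/((d_i+1)(d_i+2)) − d_j^{y1}/((d_j+1)(d_j+2)). -/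
open MeasureTheory

/-- Expected sensitivity of the prediction distance of an intra-class node pair
`(v_i, v_j)` to the presence of the edge `e_{ij}` under left-normalized GCN
aggregation: with `A_i = (X_i + ΣZ^i + ΣW^i)/(d_i+1)`,
`A_j = (X_j + ΣZ^j + ΣW^j)/(d_j+1)`, `d_i = d_i^{y0} + d_i^{y1}`,
`d_j = d_j^{y0} + d_j^{y1}`, one has
`E[(A_i − X_j)/(d_i+2) − (A_j − X_i)/(d_j+2)] = (μ₁ − μ₀)·δ` where
`δ = d_i^{y1}/((d_i+1)(d_i+2)) − d_j^{y1}/((d_j+1)(d_j+2))`. -/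
theorem expected_edge_sensitivity {Ω : Type*} [MeasurableSpace Ω]
    (μ : Measure Ω) [IsProbabilityMeasure μ]
    (di0 di1 dj0 dj1 : ℕ) (Xi Xj : Ω → ℝ)
    (Zi : Fin di0 → Ω → ℝ) (Wi : Fin di1 → Ω → ℝ)
    (Zj : Fin dj0 → Ω → ℝ) (Wj : Fin dj1 → Ω → ℝ)
    (μ₀ μ₁ : ℝ)
    (hXi : Integrable Xi μ) (hXj : Integrable Xj μ)
    (hZi : ∀ k, Integrable (Zi k) μ) (hWi : ∀ k, Integrable (Wi k) μ)
    (hZj : ∀ k, Integrable (Zj k) μ) (hWj : ∀ k, Integrable (Wj k) μ)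
    (hEXi : ∫ ω, Xi ω ∂μ = μ₀) (hEXj : ∫ ω, Xj ω ∂μ = μ₀)
    (hEZi : ∀ k, ∫ ω, Zi k ω ∂μ = μ₀) (hEWi : ∀ k, ∫ ω, Wi k ω ∂μ = μ₁)
    (hEZj : ∀ k, ∫ ω, Zj k ω ∂μ = μ₀) (hEWj : ∀ k, ∫ ω, Wj k ω ∂μ = μ₁)
    (Ai Aj : Ω → ℝ)
    (hAi : ∀ ω, Ai ω =
      (Xi ω + ∑ k, Zi k ω + ∑ k, Wi k ω) / (((di0 + di1 : ℕ) : ℝ) + 1))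
    (hAj : ∀ ω, Aj ω =
      (Xj ω + ∑ k, Zj k ω + ∑ k, Wj k ω) / (((dj0 + dj1 : ℕ) : ℝ) + 1)) :
    ∫ ω, ((Ai ω - Xj ω) / (((di0 + di1 : ℕ) : ℝ) + 2) -
          (Aj ω - Xi ω) / (((dj0 + dj1 : ℕ) : ℝ) + 2)) ∂μ =
      (μ₁ - μ₀) *
        ((di1 : ℝ) / (((((di0 + di1 : ℕ) : ℝ)) + 1) * ((((di0 + di1 : ℕ) : ℝ)) + 2)) -
         (dj1 : ℝ) / (((((dj0 + dj1 : ℕ) : ℝ)) + 1) * ((((dj0 + dj1 : ℕ) : ℝ)) + 2))) := by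
  have hZiS : Integrable (fun ω => ∑ k, Zi k ω) μ :=
    integrable_finset_sum _ fun k _ => hZi k
  have hWiS : Integrable (fun ω => ∑ k, Wi k ω) μ :=
    integrable_finset_sum _ fun k _ => hWi k
  have hZjS : Integrable (fun ω => ∑ k, Zj k ω) μ :=
    integrable_finset_sum _ fun k _ => hZj k
  have hWjS : Integrable (fun ω => ∑ k, Wj k ω) μ :=
    integrable_finset_sum _ fun k _ => hWj k
  have hXZi : Integrable (fun ω => Xi ω + ∑ k, Zi k ω) μ := hXi.add hZiS
  have hXZj : Integrable (fun ω => Xj ω + ∑ k, Zj k ω) μ := hXj.add hZjS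
  have hSi : Integrable (fun ω => Xi ω + ∑ k, Zi k ω + ∑ k, Wi k ω) μ := hXZi.add hWiS
  have hSj : Integrable (fun ω => Xj ω + ∑ k, Zj k ω + ∑ k, Wj k ω) μ := hXZj.add hWjS
  have hAiI : Integrable Ai μ :=
    (hSi.div_const (((di0 + di1 : ℕ) : ℝ) + 1)).congr
      (Filter.Eventually.of_forall fun ω => (hAi ω).symm)
  have hAjI : Integrable Aj μ :=
    (hSj.div_const (((dj0 + dj1 : ℕ) : ℝ) + 1)).congr
      (Filter.Eventually.of_forall fun ω => (hAj ω).symm)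
  have hESi : ∫ ω, (Xi ω + ∑ k, Zi k ω + ∑ k, Wi k ω) ∂μ
      = μ₀ + di0 * μ₀ + di1 * μ₁ := by
    rw [integral_add hXZi hWiS, integral_add hXi hZiS,
      integral_finset_sum _ (fun k _ => hZi k),
      integral_finset_sum _ (fun k _ => hWi k)]
    simp [hEXi, hEZi, hEWi, mul_comm]
  have hESj : ∫ ω, (Xj ω + ∑ k, Zj k ω + ∑ k, Wj k ω) ∂μ
      = μ₀ + dj0 * μ₀ + dj1 * μ₁ := by
    rw [integral_add hXZj hWjS, integral_add hXj hZjS,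
      integral_finset_sum _ (fun k _ => hZj k),
      integral_finset_sum _ (fun k _ => hWj k)]
    simp [hEXj, hEZj, hEWj, mul_comm]
  have hEAi : ∫ ω, Ai ω ∂μ
      = (μ₀ + di0 * μ₀ + di1 * μ₁) / (((di0 + di1 : ℕ) : ℝ) + 1) := by
    rw [integral_congr_ae (Filter.Eventually.of_forall hAi), integral_div, hESi]
  have hEAj : ∫ ω, Aj ω ∂μ
      = (μ₀ + dj0 * μ₀ + dj1 * μ₁) / (((dj0 + dj1 : ℕ) : ℝ) + 1) := by
    rw [integral_congr_ae (Filter.Eventually.of_forall hAj), integral_div, hESj]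
  have hAXi : Integrable (fun ω => Ai ω - Xj ω) μ := hAiI.sub hXj
  have hAXj : Integrable (fun ω => Aj ω - Xi ω) μ := hAjI.sub hXi
  have hD1 : Integrable (fun ω => (Ai ω - Xj ω) / (((di0 + di1 : ℕ) : ℝ) + 2)) μ :=
    hAXi.div_const _
  have hD2 : Integrable (fun ω => (Aj ω - Xi ω) / (((dj0 + dj1 : ℕ) : ℝ) + 2)) μ :=
    hAXj.div_const _
  rw [integral_sub hD1 hD2, integral_div, integral_div,
    integral_sub hAiI hXj, integral_sub hAjI hXi, hEAi, hEAj, hEXi, hEXj]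
  have h1 : (((di0 + di1 : ℕ) : ℝ) + 1) ≠ 0 := by positivity
  have h2 : (((di0 + di1 : ℕ) : ℝ) + 2) ≠ 0 := by positivity
  have h3 : (((dj0 + dj1 : ℕ) : ℝ) + 1) ≠ 0 := by positivity
  have h4 : (((dj0 + dj1 : ℕ) : ℝ) + 2) ≠ 0 := by positivity
  have e1 : ((di0 + di1 : ℕ) : ℝ) = (di0 : ℝ) + di1 := by push_cast; ring
  have e2 : ((dj0 + dj1 : ℕ) : ℝ) = (dj0 : ℝ) + dj1 := by push_cast; ring
  rw [e1, e2] at *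
  field_simp
  ring
end

section
/- Under the assumptions and notation of the intra-class sensitivity model, the expected sensitivity of the embedding distance to the existence of the edge e_{ij} satisfies the lower bound E[|(A_i − X_j)/(d_i+2) − (A_j − X_i)/(d_j+2)|] ≥ |μ₁ − μ₀|·|δ|, where δ = d_i^{y1}/((d_i+1)(d_i+2)) − d_j^{y1}/((d_j+1)(d_j+2)). That is, E[Δd(v_i,v_j)] ≥ |(μ₁ − μ₀)δ|, so the sensitivity grows with the between-class separation |μ₁ − μ₀|. -/
open MeasureTheory

/-- Lower bound on the expected sensitivity of the embedding distance to the edge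
`e_{ij}`: `E[|(A_i − X_j)/(d_i+2) − (A_j − X_i)/(d_j+2)|] ≥ |μ₁ − μ₀|·|δ|`, where
`δ = d_i^{y1}/((d_i+1)(d_i+2)) − d_j^{y1}/((d_j+1)(d_j+2))`; so the sensitivity
grows with the between-class separation `|μ₁ − μ₀|`. -/
theorem expected_edge_sensitivity_lower_bound {Ω : Type*} [MeasurableSpace Ω]
    (μ : Measure Ω) [IsProbabilityMeasure μ]
    (di0 di1 dj0 dj1 : ℕ) (Xi Xj : Ω → ℝ)
    (Zi : Fin di0 → Ω → ℝ) (Wi : Fin di1 → Ω → ℝ)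
    (Zj : Fin dj0 → Ω → ℝ) (Wj : Fin dj1 → Ω → ℝ)
    (μ₀ μ₁ : ℝ)
    (hXi : Integrable Xi μ) (hXj : Integrable Xj μ)
    (hZi : ∀ k, Integrable (Zi k) μ) (hWi : ∀ k, Integrable (Wi k) μ)
    (hZj : ∀ k, Integrable (Zj k) μ) (hWj : ∀ k, Integrable (Wj k) μ)
    (hEXi : ∫ ω, Xi ω ∂μ = μ₀) (hEXj : ∫ ω, Xj ω ∂μ = μ₀)
    (hEZi : ∀ k, ∫ ω, Zi k ω ∂μ = μ₀) (hEWi : ∀ k, ∫ ω, Wi k ω ∂μ = μ₁)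
    (hEZj : ∀ k, ∫ ω, Zj k ω ∂μ = μ₀) (hEWj : ∀ k, ∫ ω, Wj k ω ∂μ = μ₁)
    (Ai Aj : Ω → ℝ)
    (hAi : ∀ ω, Ai ω =
      (Xi ω + ∑ k, Zi k ω + ∑ k, Wi k ω) / (((di0 + di1 : ℕ) : ℝ) + 1))
    (hAj : ∀ ω, Aj ω =
      (Xj ω + ∑ k, Zj k ω + ∑ k, Wj k ω) / (((dj0 + dj1 : ℕ) : ℝ) + 1)) :
    |μ₁ - μ₀| *
        |(di1 : ℝ) / (((((di0 + di1 : ℕ) : ℝ)) + 1) * ((((di0 + di1 : ℕ) : ℝ)) + 2)) -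
         (dj1 : ℝ) / (((((dj0 + dj1 : ℕ) : ℝ)) + 1) * ((((dj0 + dj1 : ℕ) : ℝ)) + 2))| ≤
      ∫ ω, |(Ai ω - Xj ω) / (((di0 + di1 : ℕ) : ℝ) + 2) -
            (Aj ω - Xi ω) / (((dj0 + dj1 : ℕ) : ℝ) + 2)| ∂μ := by
  set ci : ℝ := ((di0 + di1 : ℕ) : ℝ) + 1 with hci
  set cj : ℝ := ((dj0 + dj1 : ℕ) : ℝ) + 1 with hcj
  have hSi : Integrable (fun ω => Xi ω + ∑ k, Zi k ω + ∑ k, Wi k ω) μ :=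
    ((hXi.add (integrable_finset_sum _ fun k _ => hZi k)).add
      (integrable_finset_sum _ fun k _ => hWi k))
  have hSj : Integrable (fun ω => Xj ω + ∑ k, Zj k ω + ∑ k, Wj k ω) μ :=
    ((hXj.add (integrable_finset_sum _ fun k _ => hZj k)).add
      (integrable_finset_sum _ fun k _ => hWj k))
  have hAi' : Ai = fun ω => (Xi ω + ∑ k, Zi k ω + ∑ k, Wi k ω) / ci := funext hAi
  have hAj' : Aj = fun ω => (Xj ω + ∑ k, Zj k ω + ∑ k, Wj k ω) / cj := funext hAj
  have hIAi : Integrable Ai μ := by rw [hAi']; exact hSi.div_const ci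
  have hIAj : Integrable Aj μ := by rw [hAj']; exact hSj.div_const cj
  have h1i : Integrable (fun ω => Xi ω + ∑ k, Zi k ω) μ :=
    hXi.add (integrable_finset_sum _ fun k _ => hZi k)
  have h2i : Integrable (fun ω => ∑ k, Wi k ω) μ := integrable_finset_sum _ fun k _ => hWi k
  have h3i : Integrable (fun ω => ∑ k, Zi k ω) μ := integrable_finset_sum _ fun k _ => hZi k
  have hESi : ∫ ω, (Xi ω + ∑ k, Zi k ω + ∑ k, Wi k ω) ∂μ = μ₀ + di0 * μ₀ + di1 * μ₁ := by
    rw [integral_add h1i h2i, integral_add hXi h3i,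
      integral_finset_sum _ (fun k _ => hZi k), integral_finset_sum _ (fun k _ => hWi k)]
    simp [hEXi, hEZi, hEWi]
  have h1j : Integrable (fun ω => Xj ω + ∑ k, Zj k ω) μ :=
    hXj.add (integrable_finset_sum _ fun k _ => hZj k)
  have h2j : Integrable (fun ω => ∑ k, Wj k ω) μ := integrable_finset_sum _ fun k _ => hWj k
  have h3j : Integrable (fun ω => ∑ k, Zj k ω) μ := integrable_finset_sum _ fun k _ => hZj k
  have hESj : ∫ ω, (Xj ω + ∑ k, Zj k ω + ∑ k, Wj k ω) ∂μ = μ₀ + dj0 * μ₀ + dj1 * μ₁ := by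
    rw [integral_add h1j h2j, integral_add hXj h3j,
      integral_finset_sum _ (fun k _ => hZj k), integral_finset_sum _ (fun k _ => hWj k)]
    simp [hEXj, hEZj, hEWj]
  have hEAi : ∫ ω, Ai ω ∂μ = (μ₀ + di0 * μ₀ + di1 * μ₁) / ci := by
    rw [hAi', integral_div, hESi]
  have hEAj : ∫ ω, Aj ω ∂μ = (μ₀ + dj0 * μ₀ + dj1 * μ₁) / cj := by
    rw [hAj', integral_div, hESj]
  set V : Ω → ℝ := fun ω =>
    (Ai ω - Xj ω) / (((di0 + di1 : ℕ) : ℝ) + 2) -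
      (Aj ω - Xi ω) / (((dj0 + dj1 : ℕ) : ℝ) + 2) with hV
  have hIV : Integrable V μ :=
    ((hIAi.sub hXj).div_const _).sub ((hIAj.sub hXi).div_const _)
  have hEV : ∫ ω, V ω ∂μ =
      ((μ₀ + di0 * μ₀ + di1 * μ₁) / ci - μ₀) / (((di0 + di1 : ℕ) : ℝ) + 2) -
      ((μ₀ + dj0 * μ₀ + dj1 * μ₁) / cj - μ₀) / (((dj0 + dj1 : ℕ) : ℝ) + 2) := by
    have g1 : Integrable (fun ω => (Ai ω - Xj ω) / (((di0 + di1 : ℕ) : ℝ) + 2)) μ :=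
      (hIAi.sub hXj).div_const _
    have g2 : Integrable (fun ω => (Aj ω - Xi ω) / (((dj0 + dj1 : ℕ) : ℝ) + 2)) μ :=
      (hIAj.sub hXi).div_const _
    have g3 : Integrable (fun ω => Ai ω - Xj ω) μ := hIAi.sub hXj
    have g4 : Integrable (fun ω => Aj ω - Xi ω) μ := hIAj.sub hXi
    simp only [hV]
    rw [integral_sub g1 g2, integral_div, integral_div, integral_sub hIAi hXj,
      integral_sub hIAj hXi, hEAi, hEAj, hEXi, hEXj]
  have hkey : |μ₁ - μ₀| *
      |(di1 : ℝ) / (ci * (((di0 + di1 : ℕ) : ℝ) + 2)) -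
        (dj1 : ℝ) / (cj * (((dj0 + dj1 : ℕ) : ℝ) + 2))| = |∫ ω, V ω ∂μ| := by
    rw [hEV, ← abs_mul]
    congr 1
    have h1 : ci ≠ 0 := by positivity
    have h2 : cj ≠ 0 := by positivity
    have h3 : (((di0 + di1 : ℕ) : ℝ) + 2) ≠ 0 := by positivity
    have h4 : (((dj0 + dj1 : ℕ) : ℝ) + 2) ≠ 0 := by positivity
    rw [hci, hcj] at *
    push_cast at *
    field_simp
    ring
  calc |μ₁ - μ₀| * _ = |∫ ω, V ω ∂μ| := hkey
    _ ≤ ∫ ω, |V ω| ∂μ := by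
        simpa [Real.norm_eq_abs] using norm_integral_le_integral_norm (μ := μ) V
end
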